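/- arXiv:2402.18554 — 2 statements merged into one kernel-verified Lean document; each statement's English description precedes it below -/
import Mathlib

section
/- Let L be an n-by-n lower triangular matrix and let l be the half-vectorization of L (the below-diagonal and diagonal entries stacked column by column). Then for any symmetric matrix Q, trace(L^T Q L) = l^T Q_star l, where Q_star is the block-diagonal matrix whose i-th block is the trailing principal submatrix of Q consisting of rows and columns i through n. -/
open Matrix

/-- Index set for the half-vectorization of an `n × n` lower triangular matrix:
pairs `(c, r)` (column, row) with `c ≤ r`. -/
def HvIdx (n : ℕ) : Type := {p : Fin n × Fin n // p.1 ≤ p.2}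

noncomputable instance (n : ℕ) : Fintype (HvIdx n) := by
  unfold HvIdx; infer_instance

instance (n : ℕ) : DecidableEq (HvIdx n) := by
  unfold HvIdx; infer_instance

/-- The half-vectorization of `L`: the entries `(c,c), …, (n,c)` of each column `c`. -/
def halfVec {n : ℕ} (L : Matrix (Fin n) (Fin n) ℝ) : HvIdx n → ℝ :=
  fun p => L p.1.2 p.1.1

/-- The block-diagonal matrix `Q⋆ = block-diag(Q₁, …, Qₙ)` where `Qᵢ` is the trailing
principal submatrix of `Q` on indices `i..n`: the block for column `c` acts on the row
indices `r, r' ≥ c` with entries `Q r r'`. -/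
def Qstar {n : ℕ} (Q : Matrix (Fin n) (Fin n) ℝ) : Matrix (HvIdx n) (HvIdx n) ℝ :=
  fun p q => if p.1.1 = q.1.1 then Q p.1.2 q.1.2 else 0

lemma sum_hvIdx {n : ℕ} (f : Fin n × Fin n → ℝ) :
    ∑ p : HvIdx n, f p.1 =
      ∑ p ∈ Finset.univ.filter (fun p : Fin n × Fin n => p.1 ≤ p.2), f p := by
  exact (Finset.sum_subtype (Finset.univ.filter fun p : Fin n × Fin n => p.1 ≤ p.2)
    (fun x => by simp) f).symm

/-- For `L` lower triangular and `Q` symmetric, `trace(Lᵀ Q L) = lᵀ Q⋆ l`, where `l` is the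
half-vectorization of `L` and `Q⋆` the block-diagonal matrix of trailing principal
submatrices of `Q`. -/
theorem trace_eq_halfVec_quadratic {n : ℕ}
    (L Q : Matrix (Fin n) (Fin n) ℝ) (hQ : Q.IsSymm)
    (hL_low : ∀ i j : Fin n, i < j → L i j = 0) :
    (Lᵀ * Q * L).trace = halfVec L ⬝ᵥ (Qstar Q *ᵥ halfVec L) := by
  have hz : ∀ p : Fin n × Fin n, ¬ p.1 ≤ p.2 → L p.2 p.1 = 0 := by
    intro p h
    exact hL_low p.2 p.1 (lt_of_not_ge h)
  simp only [dotProduct, mulVec, halfVec, Qstar]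
  rw [sum_hvIdx (fun p => L p.2 p.1 * ∑ q : HvIdx n,
        (if p.1 = q.1.1 then Q p.2 q.1.2 else 0) * L q.1.2 q.1.1)]
  have h1 : ∀ p : Fin n × Fin n,
      (∑ q : HvIdx n, (if p.1 = q.1.1 then Q p.2 q.1.2 else 0) * L q.1.2 q.1.1)
        = ∑ q : Fin n × Fin n, (if p.1 = q.1 then Q p.2 q.2 else 0) * L q.2 q.1 := by
    intro p
    rw [sum_hvIdx (fun q => (if p.1 = q.1 then Q p.2 q.2 else 0) * L q.2 q.1),
      Finset.sum_filter]
    refine Finset.sum_congr rfl fun q _ => ?_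
    by_cases h : q.1 ≤ q.2
    · simp [h]
    · simp [h, hz q h]
  simp only [h1]
  rw [Finset.sum_filter]
  have h2 : (∑ p : Fin n × Fin n, (if p.1 ≤ p.2 then
      L p.2 p.1 * ∑ q : Fin n × Fin n, (if p.1 = q.1 then Q p.2 q.2 else 0) * L q.2 q.1 else 0))
      = ∑ p : Fin n × Fin n,
      L p.2 p.1 * ∑ q : Fin n × Fin n, (if p.1 = q.1 then Q p.2 q.2 else 0) * L q.2 q.1 := by
    refine Finset.sum_congr rfl fun p _ => ?_
    by_cases h : p.1 ≤ p.2
    · simp [h]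
    · simp [h, hz p h]
  rw [h2]
  simp only [trace, diag_apply, mul_apply, transpose_apply, Fintype.sum_prod_type,
    ite_mul, zero_mul, mul_ite, mul_zero, Finset.mul_sum, Finset.sum_ite_eq,
    Finset.mem_univ, if_true, Finset.sum_mul]
  refine Finset.sum_congr rfl fun c _ => ?_
  rw [Finset.sum_comm]
  refine Finset.sum_congr rfl fun r _ => ?_
  conv_rhs => rw [Finset.sum_comm]
  simp [Finset.sum_ite_eq, mul_assoc]
end

section
/- For the Kalman covariance update Sigma_post = (I - Omega H) Sigma with gain Omega = Sigma H^T (H Sigma H^T + R)^{-1}, if Sigma is positive definite and R is positive definite, then Sigma_post is symmetric positive definite and Sigma_post is dominated by Sigma (i.e., Sigma - Sigma_post is positive semidefinite). -/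
open Matrix

/-- Kalman measurement update: with gain `Ω = Σ Hᵀ (H Σ Hᵀ + R)⁻¹` and
`Σpost = (I - Ω H) Σ`, if `Σ` and `R` are positive definite then `Σpost` is symmetric
positive definite and dominated by `Σ` (i.e. `Σ - Σpost` is positive semidefinite). -/
theorem kalman_update_posdef {n m : ℕ}
    (S : Matrix (Fin n) (Fin n) ℝ) (H : Matrix (Fin m) (Fin n) ℝ)
    (R : Matrix (Fin m) (Fin m) ℝ)
    (hS : S.PosDef) (hR : R.PosDef) :
    ((1 - S * Hᵀ * (H * S * Hᵀ + R)⁻¹ * H) * S).PosDef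
    ∧ (S - (1 - S * Hᵀ * (H * S * Hᵀ + R)⁻¹ * H) * S).PosSemidef := by
  have hHSH : (H * S * Hᵀ).PosSemidef := by
    simpa using hS.posSemidef.mul_mul_conjTranspose_same H
  have hA : (H * S * Hᵀ + R).PosDef := Matrix.PosDef.posSemidef_add hHSH hR
  have hkey : (1 - S * Hᵀ * (H * S * Hᵀ + R)⁻¹ * H) * S
      = S - S * Hᵀ * (H * S * Hᵀ + R)⁻¹ * (H * S) := by
    rw [Matrix.sub_mul, Matrix.one_mul, Matrix.mul_assoc]
  haveI := hS.isUnit.invertible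
  haveI := hR.isUnit.invertible
  constructor
  · have hw : (S⁻¹ + Hᵀ * R⁻¹ * H)⁻¹
        = S⁻¹⁻¹ - S⁻¹⁻¹ * Hᵀ * (R⁻¹⁻¹ + H * S⁻¹⁻¹ * Hᵀ)⁻¹ * H * S⁻¹⁻¹ := by
      apply Matrix.add_mul_mul_inv_eq_sub
      · exact hS.inv.isUnit
      · exact hR.inv.isUnit
      · rw [Matrix.inv_inv_of_invertible, Matrix.inv_inv_of_invertible]
        exact (hR.add_posSemidef hHSH).isUnit
    rw [Matrix.inv_inv_of_invertible, Matrix.inv_inv_of_invertible] at hw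
    rw [hkey]
    have heq : S - S * Hᵀ * (H * S * Hᵀ + R)⁻¹ * (H * S)
        = (S⁻¹ + Hᵀ * R⁻¹ * H)⁻¹ := by
      rw [hw, add_comm (H * S * Hᵀ) R, Matrix.mul_assoc (S * Hᵀ * (R + H * S * Hᵀ)⁻¹) H S]
    rw [heq]
    have hsum : (S⁻¹ + Hᵀ * R⁻¹ * H).PosDef := by
      have h2 : (Hᵀ * R⁻¹ * H).PosSemidef := by
        simpa using hR.inv.posSemidef.mul_mul_conjTranspose_same Hᵀ
      exact hS.inv.add_posSemidef h2
    exact hsum.inv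
  · rw [hkey]
    have hps : (S * Hᵀ * (H * S * Hᵀ + R)⁻¹ * (S * Hᵀ)ᴴ).PosSemidef :=
      hA.inv.posSemidef.mul_mul_conjTranspose_same (S * Hᵀ)
    have ht : (S * Hᵀ)ᴴ = H * S := by
      have hSt : Sᵀ = S := by
        rw [← conjTranspose_eq_transpose_of_trivial, hS.isHermitian.eq]
      rw [conjTranspose_mul, conjTranspose_eq_transpose_of_trivial,
        conjTranspose_eq_transpose_of_trivial, transpose_transpose, hSt]
    rw [ht] at hps
    simpa using hps
end
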